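/- Let α > 0 and define g_α(x) = 4^x · x^{−(lg x)/4} · x^α for x > 0, where lg denotes the base-2 logarithm. Then for every x ≥ 4^α, e^{−1/(2√x)}·(5/2)·g_α(x+1/2) ≤ g_α(x) + g_α(x+1) ≤ e^{1/(2√x)}·(5/2)·g_α(x+1/2). -/

import Mathlib

noncomputable def g (a x : ℝ) : ℝ := 4 ^ x * x ^ (-(Real.logb 2 x) / 4) * x ^ a

noncomputable def Faux (a t : ℝ) : ℝ :=
  t * (2 * Real.log 2) + a * Real.log t - (Real.log t)^2 / (4 * Real.log 2)

lemma g_eq_exp (a t : ℝ) (ht : 0 < t) : g a t = Real.exp (Faux a t) := by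
  have hc : 0 < Real.log 2 := Real.log_pos one_lt_two
  have h4 : Real.log 4 = 2 * Real.log 2 := by
    rw [show (4:ℝ) = 2^2 by norm_num, Real.log_pow]; push_cast; ring
  unfold g Faux
  rw [Real.rpow_def_of_pos (by norm_num : (0:ℝ) < 4), Real.rpow_def_of_pos ht,
      Real.rpow_def_of_pos ht, ← Real.exp_add, ← Real.exp_add]
  congr 1
  rw [Real.logb, h4]
  field_simp
  ring

/-- key quadratic estimate : for x ≥ 1, log (x+1) ≤ 2 log 2 · √x -/
lemma key_log_bound (x : ℝ) (hx : 1 ≤ x) :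
    Real.log (x + 1) ≤ 2 * Real.log 2 * Real.sqrt x := by
  have hx0 : (0:ℝ) ≤ x := by linarith
  set s := Real.sqrt (Real.sqrt x) with hs
  have hs1 : 1 ≤ s := by
    rw [hs, show (1:ℝ) = Real.sqrt (Real.sqrt 1) by simp]
    exact Real.sqrt_le_sqrt (Real.sqrt_le_sqrt hx)
  have hsq : s^2 = Real.sqrt x := Real.sq_sqrt (Real.sqrt_nonneg x)
  have hx4 : x = s^4 := by
    have h2 : (Real.sqrt x)^2 = x := Real.sq_sqrt hx0
    nlinarith [hsq]
  have hlogx : Real.log x = 4 * Real.log s := by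
    rw [hx4, Real.log_pow]; push_cast; ring
  have hls : Real.log s ≤ s - 1 := Real.log_le_sub_one_of_pos (by linarith)
  -- log (x+1) ≤ log (2x) = log 2 + log x
  have h21 : Real.log (x+1) ≤ Real.log 2 + Real.log x := by
    have : Real.log (x+1) ≤ Real.log (2*x) :=
      Real.log_le_log (by linarith) (by linarith)
    rwa [Real.log_mul (by norm_num) (by linarith)] at this
  have hc : (0.6931471803 : ℝ) < Real.log 2 := Real.log_two_gt_d9
  have hc2 : Real.log 2 < 0.6931471808 := Real.log_two_lt_d9
  rw [← hsq]
  nlinarith [sq_nonneg (2*s - 3), sq_nonneg s, sq_nonneg (s-1)]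

set_option maxHeartbeats 1000000 in
theorem stmt_3 (a : ℝ) (ha : 0 < a) (x : ℝ) (hx : (4 : ℝ) ^ a ≤ x) :
    Real.exp (-(1 / (2 * Real.sqrt x))) * (5/2) * g a (x + 1/2) ≤ g a x + g a (x + 1) ∧
    g a x + g a (x + 1) ≤ Real.exp (1 / (2 * Real.sqrt x)) * (5/2) * g a (x + 1/2) := by
  have hc : 0 < Real.log 2 := Real.log_pos one_lt_two
  set c := Real.log 2 with hcdef
  have hc' : c ≠ 0 := ne_of_gt hc
  have hx1 : 1 < x := by
    have h1 : (1:ℝ) < 4 ^ a :=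
      (Real.one_lt_rpow_iff_of_pos (by norm_num)).mpr (Or.inl ⟨by norm_num, ha⟩)
    linarith
  have hx0 : (0:ℝ) < x := by linarith
  have hs0 : 0 < Real.sqrt x := Real.sqrt_pos.mpr hx0
  have hss : Real.sqrt x * Real.sqrt x = x := Real.mul_self_sqrt hx0.le
  set p := Real.log x with hp
  set q := Real.log (x + 1/2) with hq
  set r := Real.log (x + 1) with hr
  -- basic log facts
  have hp2ac : 2*a*c ≤ p := by
    have h1 : Real.log ((4:ℝ)^a) ≤ p := Real.log_le_log (by positivity) hx
    rw [Real.log_rpow (by norm_num), show Real.log 4 = 2*c by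
      rw [hcdef, show (4:ℝ) = 2^2 by norm_num, Real.log_pow]; push_cast; ring] at h1
    linarith
  have hpq : p ≤ q := Real.log_le_log hx0 (by linarith)
  have hqr : q ≤ r := Real.log_le_log (by linarith) (by linarith)
  -- increments bounded by 1/(2x)
  have hqmp : q - p ≤ 1/(2*x) := by
    have h := Real.log_le_sub_one_of_pos (show (0:ℝ) < (x+1/2)/x by positivity)
    rw [Real.log_div (by linarith) (ne_of_gt hx0)] at h
    have h2 : (x+1/2)/x - 1 = 1/(2*x) := by field_simp; ring
    rw [h2] at h; exact h
  have hrmq : r - q ≤ 1/(2*x) := by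
    have h := Real.log_le_sub_one_of_pos (show (0:ℝ) < (x+1)/(x+1/2) by positivity)
    rw [Real.log_div (by linarith) (by linarith)] at h
    have h2 : (x+1)/(x+1/2) - 1 ≤ 1/(2*x) := by
      rw [div_sub_one (by linarith), div_le_div_iff₀ (by linarith) (by positivity)]
      nlinarith
    linarith
  -- key bound
  have hkey : r ≤ 2*c*Real.sqrt x := key_log_bound x hx1.le
  -- the midpoint quantity bounds
  have hApq0 : 0 ≤ (p+q)/(4*c) - a := by
    rw [sub_nonneg, le_div_iff₀ (by positivity)]; nlinarith
  have hApq1 : (p+q)/(4*c) - a ≤ Real.sqrt x := by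
    rw [sub_le_iff_le_add, div_le_iff₀ (by positivity)]
    nlinarith [mul_pos ha hc]
  have hArq0 : 0 ≤ (r+q)/(4*c) - a := by
    rw [sub_nonneg, le_div_iff₀ (by positivity)]; nlinarith
  have hArq1 : (r+q)/(4*c) - a ≤ Real.sqrt x := by
    rw [sub_le_iff_le_add, div_le_iff₀ (by positivity)]
    nlinarith [mul_pos ha hc]
  -- epsilon
  set ε := 1/(2*Real.sqrt x) with hε
  have hεeq : 1/(2*x) * Real.sqrt x = ε := by
    rw [hε, div_mul_eq_mul_div, one_mul, div_eq_div_iff (by positivity) (by positivity)]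
    nlinarith [hss]
  -- exponent identities
  have hu_eq : Faux a x - Faux a (x+1/2) + c = (q - p) * ((p+q)/(4*c) - a) := by
    unfold Faux
    rw [← hcdef, ← hp, ← hq]
    field_simp
    ring
  have hv_eq : Faux a (x+1) - Faux a (x+1/2) - c = -((r - q) * ((r+q)/(4*c) - a)) := by
    unfold Faux
    rw [← hcdef, ← hq, ← hr]
    field_simp
    ring
  set u := Faux a x - Faux a (x+1/2) + c with hu
  set v := Faux a (x+1) - Faux a (x+1/2) - c with hv
  have hu0 : 0 ≤ u := by rw [hu_eq]; exact mul_nonneg (by linarith) hApq0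
  have huε : u ≤ ε := by
    rw [hu_eq, ← hεeq]
    exact mul_le_mul hqmp hApq1 hApq0 (by positivity)
  have hv0 : v ≤ 0 := by
    rw [hv_eq, neg_nonpos]
    exact mul_nonneg (by linarith) hArq0
  have hvε : -ε ≤ v := by
    rw [hv_eq, ← hεeq, neg_le_neg_iff]
    exact mul_le_mul hrmq hArq1 hArq0 (by positivity)
  have hε0 : 0 < ε := by positivity
  -- rewrite the sum
  have hgx : g a x = Real.exp (Faux a (x+1/2)) * ((1/2) * Real.exp u) := by
    rw [g_eq_exp a x hx0, hu, Real.exp_add, Real.exp_sub, hcdef, Real.exp_log two_pos]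
    field_simp
  have hgx1 : g a (x+1) = Real.exp (Faux a (x+1/2)) * (2 * Real.exp v) := by
    rw [g_eq_exp a (x+1) (by linarith), hv, Real.exp_sub, Real.exp_sub, hcdef,
      Real.exp_log two_pos]
    field_simp
  have hgm : g a (x+1/2) = Real.exp (Faux a (x+1/2)) := g_eq_exp a (x+1/2) (by linarith)
  have hE : 0 < Real.exp (Faux a (x+1/2)) := Real.exp_pos _
  have hexpu_le : Real.exp u ≤ Real.exp ε := Real.exp_le_exp.mpr huε
  have hexpu_ge : Real.exp (-ε) ≤ Real.exp u := Real.exp_le_exp.mpr (by linarith)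
  have hexpv_le : Real.exp v ≤ Real.exp ε := Real.exp_le_exp.mpr (by linarith)
  have hexpv_ge : Real.exp (-ε) ≤ Real.exp v := Real.exp_le_exp.mpr hvε
  constructor
  · rw [hgx, hgx1, hgm]
    have h1 : Real.exp (-ε) * (5/2) ≤ (1/2) * Real.exp u + 2 * Real.exp v := by linarith
    calc Real.exp (-ε) * (5/2) * Real.exp (Faux a (x+1/2))
        = Real.exp (Faux a (x+1/2)) * (Real.exp (-ε) * (5/2)) := by ring
      _ ≤ Real.exp (Faux a (x+1/2)) * ((1/2) * Real.exp u + 2 * Real.exp v) :=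
          mul_le_mul_of_nonneg_left h1 hE.le
      _ = Real.exp (Faux a (x+1/2)) * ((1/2) * Real.exp u)
          + Real.exp (Faux a (x+1/2)) * (2 * Real.exp v) := by ring
  · rw [hgx, hgx1, hgm]
    have h1 : (1/2) * Real.exp u + 2 * Real.exp v ≤ Real.exp ε * (5/2) := by linarith
    calc Real.exp (Faux a (x+1/2)) * ((1/2) * Real.exp u)
          + Real.exp (Faux a (x+1/2)) * (2 * Real.exp v)
        = Real.exp (Faux a (x+1/2)) * ((1/2) * Real.exp u + 2 * Real.exp v) := by ring
      _ ≤ Real.exp (Faux a (x+1/2)) * (Real.exp ε * (5/2)) :=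
          mul_le_mul_of_nonneg_left h1 hE.le
      _ = Real.exp ε * (5/2) * Real.exp (Faux a (x+1/2)) := by ring
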